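/- arXiv:1112.1567 — 3 statements merged into one kernel-verified Lean document; each statement's English description precedes it below -/
import Mathlib

section
/- For k ≥ 1 and l ≥ 1 with k ≠ l, the derived subgroups of GL_k(F_q) and GL_l(F_q) are not isomorphic as groups. -/
/-!
`SL_n(F)` is generated by the transvections `E_ij(a)` and the matrices `diag(c, c⁻¹)`. For
`n ≥ 3` both lie in the derived subgroup of `GL_n(F)`: `E_ij(a)` is the commutator of `E_im(a)`
and `E_mj(1)` for a third index `m`, and `diag(c, c⁻¹)` is the commutator of `diag(c, 1)` with a
permutation matrix. So the derived subgroup contains the kernel of the determinant and has index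
at most `q - 1`; with `q^(l(l-1)) ≤ |GL_l|` this gives, for `2 ≤ k < l`,
`|[GL_k, GL_k]| ≤ |GL_k| < q^(k²) < |GL_l| / (q - 1) ≤ |[GL_l, GL_l]|`.
For `k = 1` the group `GL_1` is abelian while `GL_l` is not. So the order of the derived
subgroup is strictly increasing in `n ≥ 1`.
-/

namespace Matrix

open scoped commutatorElement

namespace SpecialLinearGroup

variable {ι R : Type*} [DecidableEq ι] [Fintype ι] [CommRing R]

theorem commutatorElement_transvection_transvection {i j m : ι} (hij : i ≠ j) (him : i ≠ m)
    (hmj : m ≠ j) (a b : R) :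
    ⁅transvection him a, transvection hmj b⁆ = transvection hij (a * b) := by
  rw [commutatorElement_def, transvection_inv, transvection_inv]
  refine Subtype.ext ?_
  simp only [coe_mul, transvection_coe, add_mul, mul_add, one_mul, mul_one,
    single_mul_single_same, single_mul_single_of_ne _ _ _ _ him.symm,
    single_mul_single_of_ne _ _ _ _ hmj.symm, single_mul_single_of_ne _ _ _ _ hij.symm,
    add_zero, mul_neg, neg_mul, ← single_neg]
  abel

end SpecialLinearGroup

namespace GeneralLinearGroup

variable {ι R : Type*} [DecidableEq ι] [Fintype ι] [CommRing R]

def diagonal : (ι → Rˣ) →* GL ι R :=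
  (Units.map (diagonalRingHom ι R).toMonoidHom).comp MulEquiv.piUnits.symm.toMonoidHom

@[simp]
theorem coe_diagonal (d : ι → Rˣ) :
    (diagonal d : Matrix ι ι R) = Matrix.diagonal fun i ↦ (d i : R) :=
  rfl

theorem commutator_eq_bot_of_unique [Unique ι] : commutator (GL ι R) = ⊥ :=
  (commutator_eq_bot_iff _).mpr ⟨⟨fun a b ↦ by
    ext i j
    simp [mul_apply, Subsingleton.elim i default, Subsingleton.elim j default, mul_comm]⟩⟩

theorem commutator_ne_bot [Nontrivial ι] [Nontrivial R] : commutator (GL ι R) ≠ ⊥ := by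
  obtain ⟨i, j, hij⟩ := exists_pair_ne ι
  rw [Ne, commutator_eq_bot_iff_center_eq_top]
  intro h
  have := (SpecialLinearGroup.toGL_mem_center_iff _).mp
    (h ▸ Subgroup.mem_top (SpecialLinearGroup.toGL (SpecialLinearGroup.transvection hij (1 : R))))
  exact one_ne_zero ((SpecialLinearGroup.transvection_mem_center_iff hij 1).mp this)

variable {F : Type*} [Field F]

theorem commutatorElement_diagonal_mulSingle_swap {i j : ι} (hij : i ≠ j) {c : F}
    (hc : c ≠ 0) :
    ⁅diagonal (Pi.mulSingle i (Units.mk0 c hc)), swap F i j⁆ =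
      SpecialLinearGroup.toGL (SpecialLinearGroup.diag2n hij c hc) := by
  rw [commutatorElement_def, mul_inv_eq_iff_eq_mul, mul_inv_eq_iff_eq_mul]
  ext a b
  simp only [coe_mul, coe_diagonal, SpecialLinearGroup.coe_GL_coe_matrix,
    SpecialLinearGroup.diag2n_coe, diagonal_mul, mul_diagonal, val_swap, Matrix.swap,
    PEquiv.toMatrix_apply, Equiv.toPEquiv_apply, Option.mem_some_iff]
  rcases eq_or_ne (Equiv.swap i j a) b with rfl | hb
  · simp only [Pi.mulSingle_apply, Equiv.swap_apply_def]
    split_ifs <;> simp_all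
  · simp [hb]

end GeneralLinearGroup

namespace SpecialLinearGroup

variable {ι F : Type*} [DecidableEq ι] [Fintype ι] [Field F]

theorem toGL_transvection_mem_commutator (hι : 2 < Fintype.card ι) {i j : ι} (hij : i ≠ j)
    (a : F) : toGL (transvection hij a) ∈ commutator (GL ι F) := by
  obtain ⟨m, hmi, hmj⟩ := ENat.exists_ne_ne_of_three_le
    (by rw [ENat.card_eq_coe_fintype_card]; exact_mod_cast hι) i j
  rw [← mul_one a, ← commutatorElement_transvection_transvection hij hmi.symm hmj,
    map_commutatorElement]
  exact Subgroup.commutator_mem_commutator (Subgroup.mem_top _) (Subgroup.mem_top _)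

theorem toGL_diag2n_mem_commutator {i j : ι} (hij : i ≠ j) {c : F} (hc : c ≠ 0) :
    toGL (diag2n hij c hc) ∈ commutator (GL ι F) := by
  rw [← GeneralLinearGroup.commutatorElement_diagonal_mulSingle_swap hij hc]
  exact Subgroup.commutator_mem_commutator (Subgroup.mem_top _) (Subgroup.mem_top _)

theorem toGL_mem_commutator (hι : 2 < Fintype.card ι) (g : SpecialLinearGroup ι F) :
    toGL g ∈ commutator (GL ι F) := by
  have : Nontrivial ι := Fintype.one_lt_card_iff_nontrivial.mp (by omega)
  exact diagonal_transvection_induction' (fun g ↦ toGL g ∈ commutator (GL ι F)) g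
    (fun _ _ hij _ hc ↦ toGL_diag2n_mem_commutator hij hc)
    (fun _ _ hij a ↦ toGL_transvection_mem_commutator hι hij a)
    (fun _ _ hA hB ↦ by rw [map_mul]; exact mul_mem hA hB)

end SpecialLinearGroup

namespace GeneralLinearGroup

variable {ι F : Type*} [DecidableEq ι] [Fintype ι] [Field F]

theorem ker_det_le_commutator (hι : 2 < Fintype.card ι) :
    (det : GL ι F →* Fˣ).ker ≤ commutator (GL ι F) := fun g hg ↦ by
  have : SpecialLinearGroup.toGL ⟨(g : Matrix ι ι F), congrArg Units.val hg⟩ = g := Units.ext rfl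
  exact this ▸ SpecialLinearGroup.toGL_mem_commutator hι _

variable [Fintype F]

theorem index_commutator_le (hι : 2 < Fintype.card ι) :
    (commutator (GL ι F)).index ≤ Fintype.card F - 1 := by
  have : Nonempty ι := Fintype.card_pos_iff.mp (by omega)
  calc (commutator (GL ι F)).index ≤ (det : GL ι F →* Fˣ).ker.index :=
        Subgroup.index_antitone (ker_det_le_commutator hι)
    _ = Fintype.card F - 1 := by
        rw [Subgroup.index_ker, MonoidHom.range_eq_top.mpr det_surjective, Subgroup.card_top,
          Nat.card_units, Nat.card_eq_fintype_card]

theorem card_le_mul_card_commutator (hι : 2 < Fintype.card ι) :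
    Nat.card (GL ι F) ≤ (Fintype.card F - 1) * Nat.card (commutator (GL ι F)) := by
  rw [← (commutator (GL ι F)).card_mul_index, mul_comm]
  exact Nat.mul_le_mul_right _ (index_commutator_le hι)

theorem card_lt_pow [Nonempty ι] :
    Nat.card (GL ι F) < Fintype.card F ^ (Fintype.card ι * Fintype.card ι) := by
  have card_matrix :
      Nat.card (Matrix ι ι F) = Fintype.card F ^ (Fintype.card ι * Fintype.card ι) := by
    simp [Matrix, ← pow_mul]
  exact card_matrix ▸ natCard_units_lt (Matrix ι ι F)

theorem pow_le_card (n : ℕ) : Fintype.card F ^ (n * (n - 1)) ≤ Nat.card (GL (Fin n) F) := by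
  set q := Fintype.card F
  have hq : 2 ≤ q := Fintype.one_lt_card
  rw [card_GL_field]
  calc q ^ (n * (n - 1)) = ∏ _i : Fin n, q ^ (n - 1) := by
        rw [Finset.prod_const, Finset.card_univ, Fintype.card_fin, ← pow_mul, Nat.mul_comm]
    _ ≤ ∏ i : Fin n, (q ^ n - q ^ (i : ℕ)) := by
        refine Finset.prod_le_prod' (fun i _ ↦ ?_)
        have h1 : q ^ (i : ℕ) ≤ q ^ (n - 1) := Nat.pow_le_pow_right (by omega) (by omega)
        have h2 : q ^ n = q * q ^ (n - 1) := by
          rw [← pow_succ', Nat.sub_add_cancel (Nat.one_le_of_lt i.isLt)]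
        have h3 : 2 * q ^ (n - 1) ≤ q * q ^ (n - 1) := Nat.mul_le_mul_right _ hq
        omega

variable (F) in
theorem card_commutator_strictMonoOn :
    StrictMonoOn (fun n ↦ Nat.card (commutator (GL (Fin n) F))) (Set.Ici 1) := by
  intro k hk l _ hkl
  obtain rfl | hk : k = 1 ∨ 2 ≤ k := by simp only [Set.mem_Ici] at hk; omega
  · have : Nontrivial (Fin l) := Fin.nontrivial_iff_two_le.mpr hkl
    simp only [commutator_eq_bot_of_unique, Subgroup.card_bot]
    exact (Subgroup.one_lt_card_iff_ne_bot _).mpr commutator_ne_bot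
  · set q := Fintype.card F
    have hq : 2 ≤ q := Fintype.one_lt_card
    have : NeZero k := ⟨by omega⟩
    have hGL : Nat.card (GL (Fin k) F) < q ^ (k * k) := by
      simpa using card_lt_pow (ι := Fin k) (F := F)
    suffices (q - 1) * q ^ (k * k) < (q - 1) * Nat.card (commutator (GL (Fin l) F)) from
      (Subgroup.card_le_card_group _).trans_lt (hGL.trans (lt_of_mul_lt_mul_left' this))
    calc (q - 1) * q ^ (k * k) < q ^ (k * k + 1) := by
          rw [pow_succ, mul_comm]
          exact Nat.mul_lt_mul_of_pos_left (by omega) (by positivity)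
      _ ≤ q ^ (l * (l - 1)) := Nat.pow_le_pow_right (by omega)
          (by nlinarith [Nat.mul_le_mul (show k ≤ l - 1 by omega) (show k + 1 ≤ l by omega)])
      _ ≤ Nat.card (GL (Fin l) F) := pow_le_card l
      _ ≤ (q - 1) * Nat.card (commutator (GL (Fin l) F)) :=
          card_le_mul_card_commutator (by simp only [Fintype.card_fin]; omega)

end GeneralLinearGroup

end Matrix

/-- For `k, l ≥ 1` with `k ≠ l`, the derived subgroups of `GL_k(F_q)` and `GL_l(F_q)`
(over the same finite field) are not isomorphic as groups. -/
theorem stmt_3 (F : Type) [Field F] [Fintype F] (k l : ℕ)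
    (hk : 1 ≤ k) (hl : 1 ≤ l) (hkl : k ≠ l) :
    IsEmpty (↥(commutator (Matrix.GeneralLinearGroup (Fin k) F)) ≃*
      ↥(commutator (Matrix.GeneralLinearGroup (Fin l) F))) :=
  ⟨fun e ↦ hkl ((Matrix.GeneralLinearGroup.card_commutator_strictMonoOn F).injOn hk hl
    (Nat.card_congr e.toEquiv))⟩
end

section
/- Let G, G' be groups, R a field, and V a finitely generated projective R[G]-module, V' a finitely generated projective R[G']-module. Then there is an isomorphism of R-algebras End_{R[G]}(V) ⊗_R End_{R[G']}(V') ≅ End_{R[G×G']}(V ⊠ V'). -/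
open TensorProduct

set_option synthInstance.maxHeartbeats 1000000
set_option maxHeartbeats 1000000

/-- The outer tensor product of a `G`-representation and a `G'`-representation. -/
noncomputable def outerTprod {R G G' V V' : Type} [CommSemiring R] [Monoid G] [Monoid G']
    [AddCommMonoid V] [Module R V] [AddCommMonoid V'] [Module R V']
    (ρ : Representation R G V) (ρ' : Representation R G' V') :
    Representation R (G × G') (V ⊗[R] V') where
  toFun p := TensorProduct.map (ρ p.1) (ρ' p.2)
  map_one' := by simp [TensorProduct.map_one]
  map_mul' p q := by simp [TensorProduct.map_mul]

/-- The algebra of `G`-equivariant `R`-linear endomorphisms of a representation,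
i.e. `End_{R[G]}(V)`, realised as the centralizer of the image of `G` in `End_R(V)`. -/
def equivariantEnd {R G V : Type} [CommSemiring R] [Monoid G] [AddCommMonoid V]
    [Module R V] (ρ : Representation R G V) : Subalgebra R (Module.End R V) :=
  Subalgebra.centralizer R (Set.range fun g : G => (ρ g : Module.End R V))

/-!
A finitely generated projective `R[G]`-module `V` has a finite dual basis: vectors `xᵢ` and
`G`-equivariant `fᵢ : V → R[G]` with `v = ∑ᵢ fᵢ(v) • xᵢ`. For each `i`, `m ↦ (v ↦ fᵢ(v) • m)` is an
`R`-linear map `cᵢ : V → End_{R[G]}(V)`, and every equivariant `S` equals `∑ᵢ cᵢ(S xᵢ)`. Doing this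
on both factors, `T ↦ ∑ᵢⱼ (cᵢ ⊗ c'ⱼ)(T(xᵢ ⊗ x'ⱼ))` inverts `S ⊗ S' ↦ S ⊗ S'`; the point is that
an endomorphism of `V ⊠ V'` commuting with `G × G'` also commutes with every `a ⊗ a'`,
`a ∈ R[G]`, `a' ∈ R[G']`.
-/

namespace MonoidAlgebra

variable {R G A : Type*} [CommSemiring R] [Monoid G] [Semiring A] [Algebra R A]

theorem commute_algHom_of_commute_of {φ : MonoidAlgebra R G →ₐ[R] A} {t : A}
    (h : ∀ g, Commute (φ (of R G g)) t) (a : MonoidAlgebra R G) : Commute (φ a) t := by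
  induction a using MonoidAlgebra.induction_linear with
  | zero => simp
  | add a b ha hb => rw [map_add]; exact ha.add_left hb
  | single g r =>
    rw [← mul_one r, ← smul_single', map_smul]
    exact (h g).smul_left r

end MonoidAlgebra

theorem Module.Finite.exists_dual_basis_of_projective (A M : Type*) [Semiring A]
    [AddCommMonoid M] [Module A M] [Module.Finite A M] [Module.Projective A M] :
    ∃ (n : ℕ) (x : Fin n → M) (f : Fin n → M →ₗ[A] A), ∀ m, ∑ i, f i m • x i = m := by
  obtain ⟨n, p, σ, -, -, hpσ⟩ := Module.Finite.exists_comp_eq_id_of_projective A M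
  refine ⟨n, fun i => p (Pi.single i 1), fun i => LinearMap.proj i ∘ₗ σ, fun m => ?_⟩
  calc ∑ i, σ m i • p (Pi.single i 1) = p (∑ i, Pi.single i (σ m i)) := by
        simp only [map_sum, ← map_smul, ← Pi.single_smul, smul_eq_mul, mul_one]
    _ = m := by rw [Finset.univ_sum_single]; exact LinearMap.congr_fun hpσ m

section equivariantEnd

variable {R G V : Type} [CommSemiring R] [Monoid G] [AddCommMonoid V] [Module R V]
  {ρ : Representation R G V}

theorem mem_equivariantEnd_iff {S : Module.End R V} :
    S ∈ equivariantEnd ρ ↔ ∀ g, Commute (ρ g) S := by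
  simp [equivariantEnd, Subalgebra.mem_centralizer_iff, Commute, SemiconjBy]

theorem commute_asAlgebraHom_of_mem_equivariantEnd {S : Module.End R V}
    (hS : S ∈ equivariantEnd ρ) (a : MonoidAlgebra R G) : Commute (ρ.asAlgebraHom a) S :=
  MonoidAlgebra.commute_algHom_of_commute_of
    (fun g => by rw [ρ.asAlgebraHom_of]; exact mem_equivariantEnd_iff.1 hS g) a

end equivariantEnd

namespace Representation

variable {R G V : Type} [CommSemiring R] [Monoid G] [AddCommMonoid V] [Module R V]

structure DualBasis (ρ : Representation R G V) where
  n : ℕ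
  x : Fin n → V
  f : Fin n → V →ₗ[R] MonoidAlgebra R G
  f_apply_rho : ∀ i g v, f i (ρ g v) = MonoidAlgebra.of R G g * f i v
  sum_asAlgebraHom_f_apply : ∀ v, ∑ i, ρ.asAlgebraHom (f i v) (x i) = v

theorem nonempty_dualBasis (ρ : Representation R G V)
    [Module.Finite (MonoidAlgebra R G) ρ.asModule]
    [Module.Projective (MonoidAlgebra R G) ρ.asModule] : Nonempty ρ.DualBasis := by
  obtain ⟨n, x, f, hxf⟩ :=
    Module.Finite.exists_dual_basis_of_projective (MonoidAlgebra R G) ρ.asModule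
  refine ⟨n, fun i => ρ.asModuleEquiv (x i),
    fun i => (f i).restrictScalars R ∘ₗ ρ.asModuleEquiv.symm.toLinearMap, fun i g v => ?_,
    fun v => ?_⟩
  · change f i (ρ.asModuleEquiv.symm (ρ g v)) = _
    rw [asModuleEquiv_symm_map_rho, map_smul, smul_eq_mul]
    rfl
  · simp [← asModuleEquiv_map_smul, ← map_sum, hxf]

variable {ρ : Representation R G V} (b : ρ.DualBasis)

noncomputable def DualBasis.coeffEnd (i : Fin b.n) : V →ₗ[R] equivariantEnd ρ :=
  LinearMap.codRestrict (equivariantEnd ρ).toSubmodule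
    (ρ.asAlgebraHom.toLinearMap ∘ₗ b.f i).flip fun m => mem_equivariantEnd_iff.2 fun g => by
      ext v
      change ρ g (ρ.asAlgebraHom (b.f i v) m) = ρ.asAlgebraHom (b.f i (ρ g v)) m
      rw [b.f_apply_rho, map_mul, ρ.asAlgebraHom_of]
      rfl

@[simp]
theorem DualBasis.coeffEnd_apply (i : Fin b.n) (m v : V) :
    (b.coeffEnd i m : Module.End R V) v = ρ.asAlgebraHom (b.f i v) m :=
  rfl

theorem DualBasis.sum_coeffEnd_apply_x (S : equivariantEnd ρ) :
    ∑ i, b.coeffEnd i ((S : Module.End R V) (b.x i)) = S := by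
  ext v
  simp only [AddSubmonoidClass.coe_finsetSum, LinearMap.sum_apply, coeffEnd_apply]
  calc ∑ i, ρ.asAlgebraHom (b.f i v) ((S : Module.End R V) (b.x i))
      = ∑ i, (S : Module.End R V) (ρ.asAlgebraHom (b.f i v) (b.x i)) := by
        congr! 1 with i
        exact LinearMap.congr_fun (commute_asAlgebraHom_of_mem_equivariantEnd S.2 _).eq (b.x i)
    _ = (S : Module.End R V) v := by rw [← map_sum, b.sum_asAlgebraHom_f_apply]

end Representation

section outerTprod

variable {R G G' V V' : Type} [CommSemiring R] [Monoid G] [Monoid G']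
  [AddCommMonoid V] [Module R V] [AddCommMonoid V'] [Module R V']
  {ρ : Representation R G V} {ρ' : Representation R G' V'}

theorem map_mem_equivariantEnd_outerTprod {S : Module.End R V} {S' : Module.End R V'}
    (hS : S ∈ equivariantEnd ρ) (hS' : S' ∈ equivariantEnd ρ') :
    TensorProduct.map S S' ∈ equivariantEnd (outerTprod ρ ρ') :=
  mem_equivariantEnd_iff.2 fun g => by
    change Commute (TensorProduct.map (ρ g.1) (ρ' g.2)) _
    simp only [Commute, SemiconjBy, ← TensorProduct.map_mul,
      (mem_equivariantEnd_iff.1 hS g.1).eq, (mem_equivariantEnd_iff.1 hS' g.2).eq]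

theorem commute_map_asAlgebraHom_of_mem_equivariantEnd_outerTprod
    {T : Module.End R (V ⊗[R] V')} (hT : T ∈ equivariantEnd (outerTprod ρ ρ'))
    (a : MonoidAlgebra R G) (a' : MonoidAlgebra R G') :
    Commute (TensorProduct.map (ρ.asAlgebraHom a) (ρ'.asAlgebraHom a')) T := by
  rw [← LinearMap.rTensor_comp_lTensor, ← Module.End.mul_eq_comp]
  refine Commute.mul_left ?_ ?_
  · refine MonoidAlgebra.commute_algHom_of_commute_of
      (φ := (Module.End.rTensorAlgHom R V V').comp ρ.asAlgebraHom) (fun g => ?_) a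
    have h := mem_equivariantEnd_iff.1 hT (g, 1)
    simp only [outerTprod, MonoidHom.coe_mk, OneHom.coe_mk, map_one] at h
    simp only [AlgHom.comp_apply, Representation.asAlgebraHom_of]
    exact h
  · refine MonoidAlgebra.commute_algHom_of_commute_of
      (φ := (Module.End.lTensorAlgHom R V' V).comp ρ'.asAlgebraHom) (fun g => ?_) a'
    have h := mem_equivariantEnd_iff.1 hT (1, g)
    simp only [outerTprod, MonoidHom.coe_mk, OneHom.coe_mk, map_one] at h
    simp only [AlgHom.comp_apply, Representation.asAlgebraHom_of]
    exact h

variable (ρ ρ') in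
noncomputable def equivariantEndTensorHom :
    equivariantEnd ρ ⊗[R] equivariantEnd ρ' →ₐ[R] equivariantEnd (outerTprod ρ ρ') :=
  (Module.endTensorEndAlgHom.comp
      (Algebra.TensorProduct.map (equivariantEnd ρ).val (equivariantEnd ρ').val)).codRestrict
    _ fun t => by
      induction t with
      | zero => simp
      | add t t' ht ht' => simpa using add_mem ht ht'
      | tmul S S' => exact map_mem_equivariantEnd_outerTprod S.2 S'.2

@[simp]
theorem equivariantEndTensorHom_tmul (S : equivariantEnd ρ) (S' : equivariantEnd ρ') :
    (equivariantEndTensorHom ρ ρ' (S ⊗ₜ S') : Module.End R (V ⊗[R] V')) =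
      TensorProduct.map (S : Module.End R V) (S' : Module.End R V') :=
  rfl

end outerTprod

section DualBasis

variable {R G G' V V' : Type} [CommSemiring R] [Monoid G] [Monoid G']
  [AddCommMonoid V] [Module R V] [AddCommMonoid V'] [Module R V']
  {ρ : Representation R G V} {ρ' : Representation R G' V'}
  (b : ρ.DualBasis) (b' : ρ'.DualBasis)

noncomputable def equivariantEndTensorInv :
    equivariantEnd (outerTprod ρ ρ') →ₗ[R] equivariantEnd ρ ⊗[R] equivariantEnd ρ' :=
  ∑ i, ∑ j, TensorProduct.map (b.coeffEnd i) (b'.coeffEnd j) ∘ₗ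
    LinearMap.applyₗ (b.x i ⊗ₜ b'.x j) ∘ₗ (equivariantEnd (outerTprod ρ ρ')).val.toLinearMap

theorem equivariantEndTensorInv_apply (T : equivariantEnd (outerTprod ρ ρ')) :
    equivariantEndTensorInv b b' T = ∑ i, ∑ j, TensorProduct.map (b.coeffEnd i) (b'.coeffEnd j)
      ((T : Module.End R (V ⊗[R] V')) (b.x i ⊗ₜ b'.x j)) := by
  simp [equivariantEndTensorInv]

theorem equivariantEndTensorInv_comp_equivariantEndTensorHom :
    equivariantEndTensorInv b b' ∘ₗ (equivariantEndTensorHom ρ ρ').toLinearMap =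
      LinearMap.id := by
  refine TensorProduct.ext' fun S S' => ?_
  simp [equivariantEndTensorInv_apply, ← tmul_sum, ← sum_tmul, b.sum_coeffEnd_apply_x,
    b'.sum_coeffEnd_apply_x]

theorem equivariantEndTensorHom_map_coeffEnd_apply_tmul (i : Fin b.n) (j : Fin b'.n)
    (w : V ⊗[R] V') (m : V) (m' : V') :
    (equivariantEndTensorHom ρ ρ' (TensorProduct.map (b.coeffEnd i) (b'.coeffEnd j) w) :
        Module.End R (V ⊗[R] V')) (m ⊗ₜ m') =
      TensorProduct.map (ρ.asAlgebraHom (b.f i m)) (ρ'.asAlgebraHom (b'.f j m')) w := by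
  induction w with
  | zero => simp
  | add w w' hw hw' => simp_all
  | tmul v v' => simp

theorem equivariantEndTensorHom_equivariantEndTensorInv
    (T : equivariantEnd (outerTprod ρ ρ')) :
    equivariantEndTensorHom ρ ρ' (equivariantEndTensorInv b b' T) = T := by
  refine Subtype.ext (TensorProduct.ext' fun m m' => ?_)
  calc _ = ∑ i, ∑ j, TensorProduct.map (ρ.asAlgebraHom (b.f i m))
        (ρ'.asAlgebraHom (b'.f j m')) (T.1 (b.x i ⊗ₜ b'.x j)) := by
        simp [equivariantEndTensorInv_apply, equivariantEndTensorHom_map_coeffEnd_apply_tmul]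
    _ = ∑ i, ∑ j,
        T.1 (ρ.asAlgebraHom (b.f i m) (b.x i) ⊗ₜ ρ'.asAlgebraHom (b'.f j m') (b'.x j)) := by
        congr! 2 with i - j -
        exact LinearMap.congr_fun
          (commute_map_asAlgebraHom_of_mem_equivariantEnd_outerTprod T.2 _ _).eq _
    _ = T.1 (m ⊗ₜ m') := by
        simp_rw [← map_sum, ← tmul_sum, ← sum_tmul, b.sum_asAlgebraHom_f_apply,
          b'.sum_asAlgebraHom_f_apply]

end DualBasis

theorem equivariantEndTensorHom_bijective {R G G' V V' : Type} [CommSemiring R] [Monoid G]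
    [Monoid G'] [AddCommMonoid V] [Module R V] [AddCommMonoid V'] [Module R V']
    (ρ : Representation R G V) (ρ' : Representation R G' V')
    [Module.Finite (MonoidAlgebra R G) ρ.asModule]
    [Module.Projective (MonoidAlgebra R G) ρ.asModule]
    [Module.Finite (MonoidAlgebra R G') ρ'.asModule]
    [Module.Projective (MonoidAlgebra R G') ρ'.asModule] :
    Function.Bijective (equivariantEndTensorHom ρ ρ') := by
  obtain ⟨b⟩ := ρ.nonempty_dualBasis
  obtain ⟨b'⟩ := ρ'.nonempty_dualBasis
  exact ⟨Function.LeftInverse.injective (g := equivariantEndTensorInv b b')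
      (LinearMap.congr_fun (equivariantEndTensorInv_comp_equivariantEndTensorHom b b')),
    Function.RightInverse.surjective (equivariantEndTensorHom_equivariantEndTensorInv b b')⟩

/-- If `V` is a finitely generated projective `R[G]`-module and `V'` a finitely generated
projective `R[G']`-module, then
`End_{R[G]}(V) ⊗[R] End_{R[G']}(V') ≅ End_{R[G×G']}(V ⊠ V')` as `R`-algebras. -/
theorem stmt_8 (R : Type) [Field R] (G G' : Type) [Group G] [Group G']
    (V V' : Type) [AddCommGroup V] [Module R V] [AddCommGroup V'] [Module R V']
    (ρ : Representation R G V) (ρ' : Representation R G' V')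
    (hVf : Module.Finite (MonoidAlgebra R G) ρ.asModule)
    (hVp : Module.Projective (MonoidAlgebra R G) ρ.asModule)
    (hV'f : Module.Finite (MonoidAlgebra R G') ρ'.asModule)
    (hV'p : Module.Projective (MonoidAlgebra R G') ρ'.asModule) :
    Nonempty ((↥(equivariantEnd ρ) ⊗[R] ↥(equivariantEnd ρ')) ≃ₐ[R]
      ↥(equivariantEnd (outerTprod ρ ρ'))) :=
  ⟨AlgEquiv.ofBijective _ (equivariantEndTensorHom_bijective ρ ρ')⟩
end

section
/- Let Γ be a profinite group, H a closed normal subgroup such that Γ/H is a finite ℓ-group, and R an algebraically closed field of characteristic ℓ. If χ is a smooth R-valued character of H which extends to a character of Γ, then the induced representation ind_H^Γ(χ) is indecomposable. -/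
/-- The space of the induced representation `ind_H^Γ(χ)`: functions `f : Γ → R` with
`f (h * g) = χ h * f g` for `h ∈ H`. (Since `Γ/H` is finite, compact support mod `H` is
automatic, and smoothness of such functions follows from smoothness of `χ`.) -/
def indSpace (Γ R : Type) [Group Γ] [Field R] (H : Subgroup Γ) (χ : ↥H →* Rˣ) :
    Submodule R (Γ → R) where
  carrier := {f | ∀ (h : ↥H) (g : Γ), f (↑h * g) = (χ h : R) * f g}
  add_mem' := by
    intro a b ha hb h g
    simp only [Pi.add_apply, ha h g, hb h g]
    ring
  zero_mem' := by intro h g; simp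
  smul_mem' := by
    intro c f hf h g
    simp only [Pi.smul_apply, smul_eq_mul, hf h g]
    ring

/-- The action of `γ ∈ Γ` on the induced representation, by right translation. -/
def translateInd (Γ R : Type) [Group Γ] [Field R] (H : Subgroup Γ) (χ : ↥H →* Rˣ)
    (γ : Γ) : ↥(indSpace Γ R H χ) →ₗ[R] ↥(indSpace Γ R H χ) where
  toFun f := ⟨fun x => f.1 (x * γ), fun h g => by simpa [mul_assoc] using f.2 h (g * γ)⟩
  map_add' f g := by ext x; rfl
  map_smul' c f := by ext x; rfl

/-!
Twisting right translation by an extension `χt` of `χ` gives a representation of `ind_H^Γ(χ)`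
on which `H` acts trivially, i.e. a representation of the finite `ℓ`-group `Γ/H` in
characteristic `ℓ`. Every nonzero subrepresentation of such a representation has a nonzero
invariant vector, and the invariants of the twisted action are exactly the multiples of `χt`.
So every nonzero `Γ`-stable subspace contains `χt`, and two of them cannot meet trivially.
-/

theorem Representation.exists_mem_invariants_ne_zero_of_isPGroup {p : ℕ} [Fact p.Prime]
    {k G V : Type*} [CommRing k] [CharP k p] [Group G] [Finite G] (hG : IsPGroup p G)
    [AddCommGroup V] [Module k V] (ρ : Representation k G V) {W : Submodule k V}
    (hW : ∀ g, ∀ v ∈ W, ρ g v ∈ W) (hW0 : W ≠ ⊥) :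
    ∃ w ∈ W, w ≠ 0 ∧ w ∈ ρ.invariants := by
  obtain ⟨v, hvW, hv0⟩ := Submodule.exists_mem_ne_zero_of_ne_bot hW0
  have : Module (ZMod p) V := AddCommGroup.zmodModule fun x => by
    rw [← Nat.cast_smul_eq_nsmul k, CharP.cast_eq_zero, zero_smul]
  -- the `𝔽_p`-span of the orbit of `v` is a finite `G`-set, of cardinality a positive power of `p`
  let A := Submodule.span (ZMod p) (Set.range fun g => ρ g v)
  have hvA : v ∈ A := Submodule.subset_span ⟨1, by simp⟩
  have hA : ∀ g, ∀ x ∈ A, ρ g x ∈ A := fun g x hx =>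
    (Submodule.map_span_le ((ρ g).toAddMonoidHom.toZModLinearMap p) _ A).2
      (by rintro _ ⟨h, rfl⟩; exact Submodule.subset_span ⟨g * h, by simp⟩) ⟨x, hx, rfl⟩
  let _ : MulAction G V := MulAction.compHom V ρ
  let S : SubMulAction G V := ⟨A, fun g x hx => hA g x hx⟩
  have : Module.Finite (ZMod p) A := Module.Finite.span_of_finite _ (Set.finite_range _)
  have : Nontrivial A := ⟨⟨⟨v, hvA⟩, 0, fun h => hv0 congr($h.1)⟩⟩
  have : Finite S := (Module.finite_of_finite (ZMod p) : Finite A)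
  have hcard : p ∣ Nat.card S := by
    change p ∣ Nat.card A
    rw [Module.natCard_eq_pow_finrank (K := ZMod p), Nat.card_zmod]
    exact dvd_pow_self p Module.finrank_pos.ne'
  obtain ⟨w, hw, hw0⟩ := hG.exists_fixed_point_of_prime_dvd_card_of_fixed_point S hcard
    (a := ⟨0, A.zero_mem⟩) fun g => Subtype.ext (map_zero (ρ g))
  have hwk : (w : V) ∈ Submodule.span k (Set.range fun g => ρ g v) :=
    Submodule.span_le (p := AddSubgroup.toZModSubmodule p (Submodule.span k _).toAddSubgroup)
      |>.2 Submodule.subset_span w.2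
  refine ⟨w, ?_, fun h => hw0 (Subtype.ext h).symm, fun g => congr($(hw g).1)⟩
  exact Submodule.span_le.2 (Set.range_subset_iff.2 fun g => hW g v hvW) hwk

section InducedRepresentation

variable {Γ R : Type} [Group Γ] [Field R] {H : Subgroup Γ} {χ : ↥H →* Rˣ}

@[simp] lemma translateInd_apply (γ : Γ) (f : indSpace Γ R H χ) (x : Γ) :
    (translateInd Γ R H χ γ f : Γ → R) x = (f : Γ → R) (x * γ) := rfl

/-- Right translation twisted by an extension `χt` of `χ`, so that `H` acts trivially. -/
def indTwist (χ : ↥H →* Rˣ) (χt : Γ →* Rˣ) : Representation R Γ (indSpace Γ R H χ) where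
  toFun γ := (χt γ : R)⁻¹ • translateInd Γ R H χ γ
  map_one' := by ext; simp
  map_mul' γ δ := by
    ext f x
    simp [mul_assoc, mul_comm]

lemma indTwist_apply (χt : Γ →* Rˣ) (γ : Γ) (f : indSpace Γ R H χ) (x : Γ) :
    (indTwist χ χt γ f : Γ → R) x = (χt γ : R)⁻¹ * (f : Γ → R) (x * γ) := rfl

lemma indSpace_apply_mul_of_mem [H.Normal] {χt : Γ →* Rˣ} (hχt : ∀ h : H, χt h = χ h)
    (f : indSpace Γ R H χ) (x : Γ) {h : Γ} (hh : h ∈ H) :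
    (f : Γ → R) (x * h) = χt h * (f : Γ → R) x := by
  let h' : H := ⟨x * h * x⁻¹, ‹H.Normal›.conj_mem h hh x⟩
  have hconj : χt h' = χt h := by simp [h', mul_comm (χt x)]
  simpa [h', ← hχt, hconj] using f.2 h' x

lemma isTrivial_indTwist_comp_subtype [H.Normal] {χt : Γ →* Rˣ}
    (hχt : ∀ h : H, χt h = χ h) : Representation.IsTrivial ((indTwist χ χt).comp H.subtype) where
  out h := by
    ext f x
    simp [indTwist_apply, indSpace_apply_mul_of_mem hχt f x h.2]

def indSpaceOfExtension {χt : Γ →* Rˣ} (hχt : ∀ h : H, χt h = χ h) : indSpace Γ R H χ :=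
  ⟨fun x => χt x, fun h g => by simp [hχt]⟩

lemma indSpaceOfExtension_ne_zero {χt : Γ →* Rˣ} (hχt : ∀ h : H, χt h = χ h) :
    indSpaceOfExtension hχt ≠ 0 := fun h => by
  simpa [indSpaceOfExtension] using congr($h.1 1)

lemma eq_smul_indSpaceOfExtension_of_mem_invariants {χt : Γ →* Rˣ} (hχt : ∀ h : H, χt h = χ h)
    {f : indSpace Γ R H χ} (hf : f ∈ (indTwist χ χt).invariants) :
    f = (f : Γ → R) 1 • indSpaceOfExtension hχt := by
  ext γ
  have := congr($(hf γ).1 1)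
  simp only [indTwist_apply, one_mul] at this
  simp [indSpaceOfExtension, ← this, mul_comm]

lemma indSpaceOfExtension_mem {p : ℕ} [Fact p.Prime] [CharP R p] [H.Normal] [Finite (Γ ⧸ H)]
    (hp : IsPGroup p (Γ ⧸ H)) {χt : Γ →* Rˣ} (hχt : ∀ h : H, χt h = χ h)
    {W : Submodule R (indSpace Γ R H χ)} (hW : ∀ γ, ∀ f ∈ W, translateInd Γ R H χ γ f ∈ W)
    (hW0 : W ≠ ⊥) : indSpaceOfExtension hχt ∈ W := by
  have := isTrivial_indTwist_comp_subtype hχt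
  obtain ⟨w, hwW, hw0, hw⟩ :=
    (Representation.ofQuotient (indTwist χ χt) H).exists_mem_invariants_ne_zero_of_isPGroup hp
      (by rintro ⟨γ⟩ f hf; exact W.smul_mem _ (hW γ f hf)) hW0
  set c := (w : Γ → R) 1
  have hw : w = c • indSpaceOfExtension hχt :=
    eq_smul_indSpaceOfExtension_of_mem_invariants hχt fun γ => hw γ
  have hc : c ≠ 0 := fun h => hw0 (by rw [hw, h, zero_smul])
  rw [← inv_smul_smul₀ hc (indSpaceOfExtension hχt), ← hw]
  exact W.smul_mem c⁻¹ hwW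

end InducedRepresentation

theorem stmt_12_general (ℓ : ℕ) (hℓ : ℓ.Prime)
    (Γ : Type) [Group Γ]
    (H : Subgroup Γ) [H.Normal]
    [Finite (Γ ⧸ H)] (hpgroup : IsPGroup ℓ (Γ ⧸ H))
    (R : Type) [Field R] (hchar : CharP R ℓ)
    (χ : ↥H →* Rˣ)
    (hext : ∃ χt : Γ →* Rˣ, ∀ h : ↥H, χt ↑h = χ h)
    (W₁ W₂ : Submodule R ↥(indSpace Γ R H χ))
    (hW₁ : ∀ γ : Γ, ∀ f ∈ W₁, translateInd Γ R H χ γ f ∈ W₁)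
    (hW₂ : ∀ γ : Γ, ∀ f ∈ W₂, translateInd Γ R H χ γ f ∈ W₂)
    (hcompl : IsCompl W₁ W₂) :
    W₁ = ⊥ ∨ W₂ = ⊥ := by
  have : Fact ℓ.Prime := ⟨hℓ⟩
  obtain ⟨χt, hχt⟩ := hext
  by_contra! hW
  have h₁ := indSpaceOfExtension_mem hpgroup hχt hW₁ hW.1
  have h₂ := indSpaceOfExtension_mem hpgroup hχt hW₂ hW.2
  exact indSpaceOfExtension_ne_zero hχt (Submodule.disjoint_def.1 hcompl.disjoint _ h₁ h₂)

/-- Let `Γ` be a profinite group, `H` a closed normal subgroup with `Γ/H` a finite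
`ℓ`-group, and `R` an algebraically closed field of characteristic `ℓ`. If `χ` is a
smooth `R`-valued character of `H` which extends to a character of `Γ`, then the induced
representation `ind_H^Γ(χ)` is indecomposable: for any two `Γ`-stable subspaces forming a
direct sum decomposition, one of them is zero. -/
theorem stmt_12 (ℓ : ℕ) (hℓ : ℓ.Prime)
    (Γ : Type) [Group Γ] [TopologicalSpace Γ] [IsTopologicalGroup Γ]
    [CompactSpace Γ] [TotallyDisconnectedSpace Γ] [T2Space Γ]
    (H : Subgroup Γ) [H.Normal] (hclosed : IsClosed (H : Set Γ))
    [Finite (Γ ⧸ H)] (hpgroup : IsPGroup ℓ (Γ ⧸ H))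
    (R : Type) [Field R] [IsAlgClosed R] (hchar : CharP R ℓ)
    (χ : ↥H →* Rˣ) (hsmooth : IsOpen ((χ.ker : Subgroup ↥H) : Set ↥H))
    (hext : ∃ χt : Γ →* Rˣ, ∀ h : ↥H, χt ↑h = χ h)
    (W₁ W₂ : Submodule R ↥(indSpace Γ R H χ))
    (hW₁ : ∀ γ : Γ, ∀ f ∈ W₁, translateInd Γ R H χ γ f ∈ W₁)
    (hW₂ : ∀ γ : Γ, ∀ f ∈ W₂, translateInd Γ R H χ γ f ∈ W₂)
    (hcompl : IsCompl W₁ W₂) :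
    W₁ = ⊥ ∨ W₂ = ⊥ :=
  stmt_12_general ℓ hℓ Γ H hpgroup R hchar χ hext W₁ W₂ hW₁ hW₂ hcompl
end
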